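/- arXiv:2505.12836 — 2 statements merged into one kernel-verified Lean document; each statement's English description precedes it below -/
import Mathlib

section
/- Let K be an m×n real matrix with trivial kernel (so m ≥ n), and let φ₁,...,φₘ : ℝ → ℝ₊₊ be bounded integrable positive functions. Then the function f(x) = ∏_{i=1}^m φ_i((Kx)_i) is integrable over ℝⁿ, i.e., ∫_{ℝⁿ} f(x) dx < ∞. -/
/-!
Since `K` is injective, its rows span `ℝⁿ`, so some `n` of them, indexed by `g`, form an
invertible submatrix `M`. As all factors are nonnegative, bounding each remaining factor by
an upper bound `Cᵢ` of `φᵢ` dominates the density by a constant times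
`x ↦ ∏ⱼ φ_{g j} ((M x) j)`. That is the integrable function `y ↦ ∏ⱼ φ_{g j} (y j)` composed
with `M`, and an invertible linear map only rescales Lebesgue measure.
-/

open MeasureTheory Matrix

theorem Matrix.span_row_eq_top_of_mulVec_injective {m n K : Type*} [Fintype m] [Fintype n]
    [Field K] {A : Matrix m n K} (hA : Function.Injective A.mulVec) :
    Submodule.span K (Set.range A.row) = ⊤ := by
  apply Submodule.eq_top_of_finrank_eq
  rw [← rank_eq_finrank_span_row, rank, LinearMap.finrank_range_of_inj hA,
    Module.finrank_fintype_fun_eq_card]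

theorem Matrix.exists_isUnit_submatrix_of_mulVec_injective {m n K : Type*} [Fintype m]
    [Fintype n] [DecidableEq n] [Field K] {A : Matrix m n K} (hA : Function.Injective A.mulVec) :
    ∃ g : n → m, Function.Injective g ∧ IsUnit (A.submatrix g id) := by
  obtain ⟨κ, a, ha, hspan, hli⟩ := exists_linearIndependent' K A.row
  let b : Module.Basis κ K (n → K) :=
    .mk hli (by rw [hspan, span_row_eq_top_of_mulVec_injective hA])
  let e : κ ≃ n := b.indexEquiv (Pi.basisFun K n)
  refine ⟨a ∘ e.symm, ha.comp e.symm.injective, ?_⟩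
  rw [← linearIndependent_rows_iff_isUnit]
  exact hli.comp e.symm e.symm.injective

section HaarMeasure

variable {E F : Type*} [NormedAddCommGroup E] [NormedSpace ℝ E] [MeasurableSpace E]
  [BorelSpace E] [FiniteDimensional ℝ E] {μ : Measure E} [μ.IsAddHaarMeasure]

theorem MeasureTheory.Integrable.comp_linearMap_of_det_ne_zero [NormedAddCommGroup F]
    {g : E → F} (hg : Integrable g μ) {L : E →ₗ[ℝ] E} (hL : LinearMap.det L ≠ 0) :
    Integrable (g ∘ L) μ := by
  have hmap : Integrable g (μ.map L) := by
    rw [Measure.map_linearMap_addHaar_eq_smul_addHaar μ hL]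
    exact hg.smul_measure ENNReal.ofReal_ne_top
  exact (integrable_map_measure hmap.aestronglyMeasurable
    L.continuous_of_finiteDimensional.aemeasurable).mp hmap

theorem MeasureTheory.AEStronglyMeasurable.comp_linearFunctional [TopologicalSpace F]
    {g : ℝ → F} (hg : AEStronglyMeasurable g volume) (ℓ : E →ₗ[ℝ] ℝ) :
    AEStronglyMeasurable (g ∘ ℓ) μ := by
  rcases eq_or_ne ℓ 0 with rfl | hℓ
  · exact (aestronglyMeasurable_const : AEStronglyMeasurable (fun _ => g 0) μ)
  obtain ⟨c, -, hc⟩ := ℓ.exists_map_addHaar_eq_smul_addHaar μ volume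
    (LinearMap.surjective_of_ne_zero hℓ)
  exact hg.comp_quasiMeasurePreserving
    ⟨ℓ.continuous_of_finiteDimensional.measurable, hc ▸ Measure.smul_absolutelyContinuous⟩

end HaarMeasure

theorem Finset.prod_le_prod_compl_mul_prod_comp {ι κ R : Type*} [Fintype ι] [Fintype κ]
    [DecidableEq ι] [CommMonoidWithZero R] [PartialOrder R] [ZeroLEOneClass R] [PosMulMono R]
    {g : κ → ι} (hg : Function.Injective g) {u C : ι → R} (h0 : ∀ i, 0 ≤ u i)
    (hu : ∀ i, u i ≤ C i) :
    ∏ i, u i ≤ (∏ i ∈ (univ.image g)ᶜ, C i) * ∏ j, u (g j) := by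
  rw [← prod_mul_prod_compl (univ.image g), prod_image hg.injOn, mul_comm (∏ i ∈ _ᶜ, C i)]
  exact mul_le_mul_of_nonneg_left (prod_le_prod (fun i _ => h0 i) fun i _ => hu i)
    (prod_nonneg fun j _ => h0 (g j))

/-- If `K` is an `m × n` real matrix with trivial kernel and each factor
`φ i : ℝ → ℝ` is positive, bounded and integrable, then the product-of-experts density
`x ↦ ∏ i, φ i ((K x)_i)` is integrable over `ℝⁿ`. -/
theorem poe_integrable_of_trivial_kernel
    {m n : ℕ} (K : Matrix (Fin m) (Fin n) ℝ)
    (hker : ∀ x : Fin n → ℝ, K.mulVec x = 0 → x = 0)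
    (φ : Fin m → ℝ → ℝ)
    (hpos : ∀ i t, 0 < φ i t)
    (hbd : ∀ i, ∃ C : ℝ, ∀ t, φ i t ≤ C)
    (hint : ∀ i, Integrable (φ i) (volume : Measure ℝ)) :
    Integrable (fun x : Fin n → ℝ => ∏ i, φ i (K.mulVec x i))
      (volume : Measure (Fin n → ℝ)) := by
  have hK : Function.Injective K.mulVec := by
    rw [← coe_mulVecLin, ← LinearMap.ker_eq_bot, ker_mulVecLin_eq_bot_iff]
    exact hker
  obtain ⟨g, hg, hM⟩ := exists_isUnit_submatrix_of_mulVec_injective hK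
  choose C hC using hbd
  have hdet : LinearMap.det (toLin' (K.submatrix g id)) ≠ 0 := by
    rw [LinearMap.det_toLin']
    exact ((isUnit_iff_isUnit_det _).mp hM).ne_zero
  have hmajorant : Integrable (fun x => (∏ i ∈ (Finset.univ.image g)ᶜ, C i) *
      ∏ j, φ (g j) ((K.submatrix g id *ᵥ x) j)) volume :=
    ((Integrable.fintype_prod fun j => hint (g j)).comp_linearMap_of_det_ne_zero hdet).const_mul _
  refine hmajorant.mono' ?_ (ae_of_all _ fun x => ?_)
  · exact Finset.aestronglyMeasurable_fun_prod _ fun i _ =>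
      (hint i).aestronglyMeasurable.comp_linearFunctional
        ((LinearMap.proj i : (Fin m → ℝ) →ₗ[ℝ] ℝ) ∘ₗ K.mulVecLin)
  · rw [Real.norm_of_nonneg (Finset.prod_nonneg fun i _ => (hpos i _).le)]
    exact Finset.prod_le_prod_compl_mul_prod_comp hg (fun i => (hpos i _).le) fun i => hC i _
end

section
/- Let K ∈ ℝ^{m×n} have non-trivial kernel N, and restrict the product-of-experts density f(x) = ∏_{i=1}^m φ_i((Kx)_i) to the orthogonal complement N^⊥ = range(Kᵀ). Then ∫_{N^⊥} f(x) dx < ∞, i.e., f defines a proper (finite-measure) density on the subspace N^⊥. -/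
/-!
On `N^⊥` the matrix `K` is injective, so the coordinate functionals `v ↦ (K v)ᵢ` separate
points and some of them, indexed by `s`, form a basis of the dual space. In these linear
coordinates the experts `i ∈ s` become a product density on `ℝ^s`, integrable by Fubini, and
each remaining expert is bounded by a constant.
-/

open MeasureTheory Module

theorem Module.Dual.exists_linearEquiv_pi_of_iInf_ker_eq_bot {K V ι : Type*} [Field K]
    [AddCommGroup V] [Module K V] [FiniteDimensional K V] [Finite ι]
    {ℓ : ι → Dual K V} (hℓ : ⨅ i, LinearMap.ker (ℓ i) = ⊥) :
    ∃ (s : Finset ι) (L : V ≃ₗ[K] (s → K)), ∀ v (i : s), L v i = ℓ i v := by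
  classical
  have hspan : Submodule.span K (Set.range ℓ) = ⊤ :=
    Submodule.eq_top_iff'.2 fun f => mem_span_of_iInf_ker_le_ker (by simp [hℓ])
  obtain ⟨b, -, -, hb_span, hb_li⟩ :=
    exists_linearIndepOn_extension (linearIndepOn_empty K ℓ) (Set.empty_subset Set.univ)
  obtain ⟨s, rfl⟩ := (Set.toFinite b).exists_finset_coe
  have hs_span : ⊤ ≤ Submodule.span K (Set.range fun i : s => ℓ i) := by
    have := Submodule.span_le.2 hb_span
    rwa [Set.image_univ, hspan, Set.image_eq_range] at this
  let B : Basis s K (Dual K V) := Basis.mk hb_li hs_span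
  refine ⟨s, (B.dualBasis.map (evalEquiv K V).symm).equivFun, fun v i => ?_⟩
  simp [B]

theorem MeasureTheory.Integrable.comp_linearEquiv {E F G : Type*}
    [NormedAddCommGroup E] [NormedSpace ℝ E] [MeasurableSpace E] [BorelSpace E]
    [FiniteDimensional ℝ E] [NormedAddCommGroup F] [NormedSpace ℝ F] [MeasurableSpace F]
    [BorelSpace F] [FiniteDimensional ℝ F] [NormedAddCommGroup G]
    {μ : Measure E} [μ.IsAddHaarMeasure] {ν : Measure F} [ν.IsAddHaarMeasure]
    {g : F → G} (hg : Integrable g ν) (L : E ≃ₗ[ℝ] F) : Integrable (g ∘ L) μ := by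
  have hmap : μ.map L = (μ.map L).addHaarScalarFactor ν • ν :=
    Measure.isAddLeftInvariant_eq_smul _ _
  have : Integrable g (μ.map L) := by
    rw [hmap]; exact hg.smul_measure ENNReal.coe_ne_top
  exact (integrable_map_equiv L.toContinuousLinearEquiv.toHomeomorph.toMeasurableEquiv g).1 this

theorem MeasureTheory.AEStronglyMeasurable.comp_surjective_linearMap {E F β : Type*}
    [NormedAddCommGroup E] [NormedSpace ℝ E] [MeasurableSpace E] [BorelSpace E]
    [FiniteDimensional ℝ E] [NormedAddCommGroup F] [NormedSpace ℝ F] [MeasurableSpace F]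
    [BorelSpace F] [FiniteDimensional ℝ F] [TopologicalSpace β]
    {μ : Measure E} [μ.IsAddHaarMeasure] {ν : Measure F} [ν.IsAddHaarMeasure]
    {g : F → β} (hg : AEStronglyMeasurable g ν) {L : E →ₗ[ℝ] F}
    (hL : Function.Surjective L) : AEStronglyMeasurable (g ∘ L) μ := by
  obtain ⟨c, -, hc⟩ := L.exists_map_addHaar_eq_smul_addHaar μ ν hL
  refine hg.comp_quasiMeasurePreserving ⟨L.continuous_of_finiteDimensional.measurable, ?_⟩
  rw [hc]
  exact Measure.smul_absolutelyContinuous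

theorem integrable_prod_comp_dual_of_iInf_ker_eq_bot {ι E : Type*} [Fintype ι]
    [NormedAddCommGroup E] [NormedSpace ℝ E] [MeasurableSpace E] [BorelSpace E]
    [FiniteDimensional ℝ E] (μ : Measure E) [μ.IsAddHaarMeasure]
    {ℓ : ι → Dual ℝ E} (hℓ : ⨅ i, LinearMap.ker (ℓ i) = ⊥) {φ : ι → ℝ → ℝ}
    (hφ_nonneg : ∀ i t, 0 ≤ φ i t) (hφ_bdd : ∀ i, ∃ C, ∀ t, φ i t ≤ C)
    (hφ_int : ∀ i, Integrable (φ i)) :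
    Integrable (fun v => ∏ i, φ i (ℓ i v)) μ := by
  classical
  choose C hC using hφ_bdd
  obtain ⟨s, L, hL⟩ := Module.Dual.exists_linearEquiv_pi_of_iInf_ker_eq_bot hℓ
  have hs_int : Integrable (fun v => ∏ i ∈ s, φ i (ℓ i v)) μ := by
    have := (Integrable.fintype_prod fun i : s => hφ_int i).comp_linearEquiv (μ := μ) L
    convert this using 2 with v
    simp only [Function.comp_apply, hL]
    exact (Finset.prod_coe_sort s fun i => φ i (ℓ i v)).symm
  have hmeas (i : ι) : AEStronglyMeasurable (fun v => φ i (ℓ i v)) μ := by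
    rcases eq_or_ne (ℓ i) 0 with h | h
    · simp only [h, LinearMap.zero_apply]
      exact aestronglyMeasurable_const
    · exact (hφ_int i).1.comp_surjective_linearMap (LinearMap.surjective_of_ne_zero h)
  refine (hs_int.const_mul (∏ i ∈ sᶜ, C i)).mono'
    (Finset.aestronglyMeasurable_fun_prod _ fun i _ => hmeas i) (.of_forall fun v => ?_)
  rw [Real.norm_of_nonneg (Finset.prod_nonneg fun i _ => hφ_nonneg i _),
    ← Finset.prod_mul_prod_compl s, mul_comm]
  gcongr with i
  · exact Finset.prod_nonneg fun i _ => hφ_nonneg i _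
  · exact fun i _ => hφ_nonneg i _
  · exact hC i _

theorem LinearMap.ker_comp_subtype_orthogonal_ker {𝕜 E F : Type*} [RCLike 𝕜]
    [NormedAddCommGroup E] [InnerProductSpace 𝕜 E] [AddCommGroup F] [Module 𝕜 F]
    (f : E →ₗ[𝕜] F) : LinearMap.ker (f ∘ₗ (LinearMap.ker f)ᗮ.subtype) = ⊥ := by
  rw [LinearMap.ker_comp, ← Submodule.disjoint_iff_comap_eq_bot]
  exact (LinearMap.ker f).orthogonal_disjoint.symm

theorem EuclideanSpace.iInf_ker_projₗ_comp {ι 𝕜 E : Type*} [RCLike 𝕜] [AddCommGroup E]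
    [Module 𝕜 E] (T : E →ₗ[𝕜] EuclideanSpace 𝕜 ι) :
    ⨅ i, LinearMap.ker (EuclideanSpace.projₗ i ∘ₗ T) = LinearMap.ker T := by
  ext v
  simp [Submodule.mem_iInf, PiLp.ext_iff]

/-- Even when `K` has a non-trivial kernel `N`, the product-of-experts
density restricted to the orthogonal complement `N^⊥` is integrable with respect to the
Lebesgue measure on the subspace `N^⊥`. -/
theorem poe_integrable_on_orthogonal_complement
    {m n : ℕ} (K : Matrix (Fin m) (Fin n) ℝ)
    (φ : Fin m → ℝ → ℝ)
    (hpos : ∀ i t, 0 < φ i t)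
    (hbd : ∀ i, ∃ C : ℝ, ∀ t, φ i t ≤ C)
    (hint : ∀ i, Integrable (φ i) (volume : Measure ℝ)) :
    Integrable
      (fun v : ((LinearMap.ker (Matrix.toEuclideanLin K))ᗮ :
          Submodule ℝ (EuclideanSpace ℝ (Fin n))) =>
        ∏ i, φ i (Matrix.toEuclideanLin K (v : EuclideanSpace ℝ (Fin n)) i)) := by
  let T := Matrix.toEuclideanLin K
  have hℓ :
      ⨅ i, LinearMap.ker (EuclideanSpace.projₗ i ∘ₗ T ∘ₗ (LinearMap.ker T)ᗮ.subtype) = ⊥ := by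
    rw [EuclideanSpace.iInf_ker_projₗ_comp, T.ker_comp_subtype_orthogonal_ker]
  exact integrable_prod_comp_dual_of_iInf_ker_eq_bot volume hℓ (fun i t => (hpos i t).le) hbd hint
end
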